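/- Consider PreconEmaHB(η, β₁, P) on the quadratic f(x) = (1/2)xᵀAx + bᵀx + c, with P symmetric positive definite and A symmetric. If the largest eigenvalue of P^{−1/2}AP^{−1/2} exceeds (2 + 2β₁)/(η(1−β₁)), then for generic initializations the component of P^{1/2}x_t along the top eigenvector v₁ of P^{−1/2}AP^{−1/2} diverges in absolute value. -/

import Mathlib

/-!
With `y t = v₁ ⬝ᵥ Q x t` and `μ t = v₁ ⬝ᵥ Q⁻¹ m t`, the preconditioned iteration projects onto
the eigendirection as scalar heavy ball with curvature `a`. Eliminating `μ` and centring at the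
stationary point `y* = -(v₁ ⬝ᵥ Q⁻¹ b) / a` gives `z (t+2) = c z (t+1) - β₁ z t` with
`c = 1 + β₁ - η(1-β₁)a`. The step-size condition says `c < -(1 + β₁)`, so `X² - cX + β₁` has
roots `r < -1 < s ≤ 0`, and `z t = C rᵗ + D sᵗ` where genericity is exactly `C ≠ 0`.
-/

open Filter Matrix

theorem exists_roots_of_lt_neg_one_sub {c β : ℝ} (hβ0 : 0 ≤ β) (hc : c < -(1 + β)) :
    ∃ r s : ℝ, r + s = c ∧ r * s = β ∧ 1 < |r| ∧ |s| < 1 := by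
  have hD : 0 ≤ c ^ 2 - 4 * β := by
    nlinarith [sq_nonneg (1 - β),
      mul_self_le_mul_self (by linarith : 0 ≤ 1 + β) (by linarith : 1 + β ≤ -c)]
  set D := c ^ 2 - 4 * β
  have hsqrt_sq : √D ^ 2 = D := Real.sq_sqrt hD
  have hsqrt_gt : |c + 2| < √D := by
    rw [← Real.sqrt_sq_eq_abs]
    exact Real.sqrt_lt_sqrt (sq_nonneg _) (by nlinarith)
  have hsqrt_le : √D ≤ -c := Real.sqrt_le_iff.2 ⟨by linarith, by nlinarith⟩
  refine ⟨(c - √D) / 2, (c + √D) / 2, by ring, by linear_combination (-1/4 : ℝ) * hsqrt_sq,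
    ?_, abs_lt.2 ⟨?_, ?_⟩⟩
  · rw [abs_of_neg (by linarith [abs_nonneg (c + 2)])]
    linarith [le_abs_self (c + 2)]
  · linarith [neg_le_abs (c + 2)]
  · linarith

section LinearRecurrence

variable {r s : ℝ} {z : ℕ → ℝ}

theorem eq_mul_pow_add_mul_pow_of_recurrence (hrs : r ≠ s)
    (hz : ∀ t, z (t + 2) = (r + s) * z (t + 1) - r * s * z t) (t : ℕ) :
    z t = (z 1 - s * z 0) / (r - s) * r ^ t + (z 0 - (z 1 - s * z 0) / (r - s)) * s ^ t := by
  have hsub : r - s ≠ 0 := sub_ne_zero.2 hrs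
  induction t using Nat.twoStepInduction with
  | zero => ring
  | one => field_simp; ring
  | more t ih₀ ih₁ =>
    rw [hz, ih₀, ih₁]
    ring

theorem tendsto_abs_mul_pow_add_mul_pow {C D : ℝ} (hC : C ≠ 0) (hr : 1 < |r|) (hs : |s| ≤ 1) :
    Tendsto (fun t : ℕ => |C * r ^ t + D * s ^ t|) atTop atTop := by
  have hlower : ∀ t : ℕ, |C| * |r| ^ t - |D| ≤ |C * r ^ t + D * s ^ t| := fun t =>
    calc |C| * |r| ^ t - |D| ≤ |C * r ^ t| - |D * s ^ t| := by
          rw [abs_mul, abs_mul, abs_pow, abs_pow]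
          gcongr
          exact mul_le_of_le_one_right (abs_nonneg D) (pow_le_one₀ (abs_nonneg s) hs)
      _ ≤ |C * r ^ t + D * s ^ t| := abs_sub_abs_le_abs_add _ _
  refine tendsto_atTop_mono hlower (tendsto_atTop_add_const_right _ _ ?_)
  exact (tendsto_pow_atTop_atTop_of_one_lt hr).const_mul_atTop (abs_pos.2 hC)

theorem tendsto_abs_of_recurrence (hr : 1 < |r|) (hs : |s| ≤ 1)
    (hz : ∀ t, z (t + 2) = (r + s) * z (t + 1) - r * s * z t) (h01 : z 1 ≠ s * z 0) :
    Tendsto (fun t => |z t|) atTop atTop := by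
  have hrs : r ≠ s := fun h => by linarith [h ▸ hr]
  refine (tendsto_abs_mul_pow_add_mul_pow (D := z 0 - (z 1 - s * z 0) / (r - s))
    (div_ne_zero (sub_ne_zero.2 h01) (sub_ne_zero.2 hrs)) hr hs).congr fun t => ?_
  rw [eq_mul_pow_add_mul_pow_of_recurrence hrs hz t]

end LinearRecurrence

theorem tendsto_abs_of_tendsto_abs_sub {α : Type*} {l : Filter α} {f : α → ℝ} (c : ℝ)
    (h : Tendsto (fun t => |f t - c|) l atTop) : Tendsto (fun t => |f t|) l atTop :=
  tendsto_atTop_mono (fun t => by linarith [abs_sub (f t) c])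
    (tendsto_atTop_add_const_right _ (-|c|) h)

theorem emaHB_scalar_recurrence {η β a b yStar : ℝ} {y μ : ℕ → ℝ}
    (hμ : ∀ t, μ (t + 1) = β * μ t + (1 - β) * (a * y t + b))
    (hy : ∀ t, y (t + 1) = y t - η * μ (t + 1)) (hstar : a * yStar + b = 0) (t : ℕ) :
    y (t + 2) - yStar =
      (1 + β - η * (1 - β) * a) * (y (t + 1) - yStar) - β * (y t - yStar) := by
  linear_combination hy (t + 1) - η * hμ (t + 1) - β * hy t - η * (1 - β) * hstar

section Projection

variable {ι : Type*} [Fintype ι]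

theorem vecMul_eq_smul_of_isSymm_conj [DecidableEq ι] {A Q Qinv : Matrix ι ι ℝ} {v : ι → ℝ}
    {a : ℝ} (hA : A.IsSymm) (hQ : Q.IsSymm) (hQinv : Qinv * Q = 1)
    (heig : (Qinv * A * Qinv) *ᵥ v = a • v) : v ᵥ* (Qinv * A) = a • (v ᵥ* Q) := by
  have hQinv_symm : Qinv.IsSymm := inv_eq_left_inv hQinv ▸ hQ.inv
  have hM : (Qinv * A * Qinv).IsSymm := by
    simp only [IsSymm, transpose_mul, hA.eq, hQinv_symm.eq, mul_assoc]
  calc v ᵥ* (Qinv * A) = v ᵥ* (Qinv * A * Qinv) ᵥ* Q := by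
        rw [vecMul_vecMul, mul_assoc (Qinv * A), hQinv, mul_one]
    _ = a • (v ᵥ* Q) := by rw [← hM.eq, vecMul_transpose, heig, smul_vecMul]

variable {A Pinv Q Qinv : Matrix ι ι ℝ} {b v : ι → ℝ} {η β a : ℝ} {x m : ℕ → ι → ℝ}

theorem dotProduct_momentum_succ (hv : v ᵥ* (Qinv * A) = a • (v ᵥ* Q))
    (hm : ∀ t, m (t + 1) = β • m t + (1 - β) • (A *ᵥ x t + b)) (t : ℕ) :
    v ⬝ᵥ Qinv *ᵥ m (t + 1) =
      β * (v ⬝ᵥ Qinv *ᵥ m t) + (1 - β) * (a * (v ⬝ᵥ Q *ᵥ x t) + v ⬝ᵥ Qinv *ᵥ b) := by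
  have hgrad : v ⬝ᵥ Qinv *ᵥ (A *ᵥ x t) = a * (v ⬝ᵥ Q *ᵥ x t) := by
    rw [mulVec_mulVec, dotProduct_mulVec, hv, smul_dotProduct, ← dotProduct_mulVec, smul_eq_mul]
  rw [hm t, mulVec_add, mulVec_smul, mulVec_smul, mulVec_add, dotProduct_add, dotProduct_smul,
    dotProduct_smul, dotProduct_add, hgrad, smul_eq_mul, smul_eq_mul]

theorem dotProduct_iterate_succ (hQP : Q * Pinv = Qinv)
    (hx : ∀ t, x (t + 1) = x t - η • Pinv *ᵥ m (t + 1)) (t : ℕ) :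
    v ⬝ᵥ Q *ᵥ x (t + 1) = v ⬝ᵥ Q *ᵥ x t - η * (v ⬝ᵥ Qinv *ᵥ m (t + 1)) := by
  rw [hx t, mulVec_sub, mulVec_smul, mulVec_mulVec, hQP, dotProduct_sub, dotProduct_smul,
    smul_eq_mul]

end Projection

theorem preconEmaHB_unstable_general (n : ℕ)
    (A P Pinv Q Qinv : Matrix (Fin n) (Fin n) ℝ)
    (hA : A.IsSymm) (hQ : Q.PosDef) (hQQ : Q * Q = P)
    (hPinv : P * Pinv = 1)
    (hQinv' : Qinv * Q = 1)
    (b : Fin n → ℝ) (η β₁ : ℝ) (hβ0 : 0 ≤ β₁) (hβ1 : β₁ < 1) (hη : 0 < η)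
    (v₁ : Fin n → ℝ) (a : ℝ)
    (heig : (Qinv * A * Qinv).mulVec v₁ = a • v₁)
    (hsharp : a > (2 + 2 * β₁) / (η * (1 - β₁))) :
    ∃ r s ystar : ℝ,
      r ^ 2 - (1 + β₁ - η * (1 - β₁) * a) * r + β₁ = 0 ∧
      s ^ 2 - (1 + β₁ - η * (1 - β₁) * a) * s + β₁ = 0 ∧
      |r| > 1 ∧
      ystar = (1 + β₁ - η * (1 - β₁) * a) * ystar - β₁ * ystar
        - η * (1 - β₁) * (v₁ ⬝ᵥ Qinv.mulVec b) ∧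
      ∀ x m : ℕ → Fin n → ℝ,
        (∀ t, m (t + 1) = β₁ • m t + (1 - β₁) • (A.mulVec (x t) + b)) →
        (∀ t, x (t + 1) = x t - η • Pinv.mulVec (m (t + 1))) →
        v₁ ⬝ᵥ Q.mulVec (x 1) - ystar ≠ s * (v₁ ⬝ᵥ Q.mulVec (x 0) - ystar) →
        Tendsto (fun t => |v₁ ⬝ᵥ Q.mulVec (x t)|) atTop atTop := by
  have hηβ : 0 < η * (1 - β₁) := mul_pos hη (by linarith)
  have hstep : 2 + 2 * β₁ < η * (1 - β₁) * a := by rwa [gt_iff_lt, div_lt_iff₀' hηβ] at hsharp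
  obtain ⟨r, s, hsum, hprod, hr, hs⟩ :=
    exists_roots_of_lt_neg_one_sub (c := 1 + β₁ - η * (1 - β₁) * a) hβ0 (by linarith)
  have ha : a ≠ 0 := by rintro rfl; linarith
  set b' := v₁ ⬝ᵥ Qinv *ᵥ b
  have hstar : a * (-b' / a) + b' = 0 := by field_simp; ring
  refine ⟨r, s, -b' / a, by linear_combination r * hsum - hprod,
    by linear_combination s * hsum - hprod, hr, by linear_combination η * (1 - β₁) * hstar, ?_⟩
  intro x m hm hx h01
  have hQP : Q * Pinv = Qinv := by
    calc Q * Pinv = Qinv * (Q * Q) * Pinv := by rw [← mul_assoc, hQinv', one_mul]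
      _ = Qinv := by rw [hQQ, mul_assoc, hPinv, mul_one]
  have hv := vecMul_eq_smul_of_isSymm_conj hA
    (isHermitian_iff_isSymm.1 hQ.isHermitian) hQinv' heig
  have hz := emaHB_scalar_recurrence (y := fun t => v₁ ⬝ᵥ Q *ᵥ x t)
    (μ := fun t => v₁ ⬝ᵥ Qinv *ᵥ m t) (dotProduct_momentum_succ hv hm)
    (dotProduct_iterate_succ (v := v₁) hQP hx) hstar
  rw [← hsum, ← hprod] at hz
  exact tendsto_abs_of_tendsto_abs_sub (-b' / a)
    (tendsto_abs_of_recurrence (z := fun t => v₁ ⬝ᵥ Q *ᵥ x t - -b' / a) hr hs.le hz h01)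

theorem preconEmaHB_unstable (n : ℕ)
    (A P Pinv Q Qinv : Matrix (Fin n) (Fin n) ℝ)
    (hA : A.IsSymm) (hP : P.PosDef) (hQ : Q.PosDef) (hQQ : Q * Q = P)
    (hPinv : P * Pinv = 1) (hPinv' : Pinv * P = 1)
    (hQinv : Q * Qinv = 1) (hQinv' : Qinv * Q = 1)
    (b : Fin n → ℝ) (η β₁ : ℝ) (hβ0 : 0 ≤ β₁) (hβ1 : β₁ < 1) (hη : 0 < η)
    (v₁ : Fin n → ℝ) (hv₁ : v₁ ≠ 0) (a : ℝ)
    (heig : (Qinv * A * Qinv).mulVec v₁ = a • v₁)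
    (htop : ∀ μ ∈ spectrum ℝ (Qinv * A * Qinv), μ ≤ a)
    (hsharp : a > (2 + 2 * β₁) / (η * (1 - β₁))) :
    ∃ r s ystar : ℝ,
      r ^ 2 - (1 + β₁ - η * (1 - β₁) * a) * r + β₁ = 0 ∧
      s ^ 2 - (1 + β₁ - η * (1 - β₁) * a) * s + β₁ = 0 ∧
      |r| > 1 ∧
      ystar = (1 + β₁ - η * (1 - β₁) * a) * ystar - β₁ * ystar
        - η * (1 - β₁) * (v₁ ⬝ᵥ Qinv.mulVec b) ∧
      ∀ x m : ℕ → Fin n → ℝ,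
        (∀ t, m (t + 1) = β₁ • m t + (1 - β₁) • (A.mulVec (x t) + b)) →
        (∀ t, x (t + 1) = x t - η • Pinv.mulVec (m (t + 1))) →
        v₁ ⬝ᵥ Q.mulVec (x 1) - ystar ≠ s * (v₁ ⬝ᵥ Q.mulVec (x 0) - ystar) →
        Tendsto (fun t => |v₁ ⬝ᵥ Q.mulVec (x t)|) atTop atTop :=
  preconEmaHB_unstable_general n A P Pinv Q Qinv hA hQ hQQ hPinv hQinv' b η β₁ hβ0 hβ1 hη v₁ a heig
    hsharp
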